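/- For every k ∈ {1, …, m}, the breakpoint value p_k := p*(μ_k) = s_k + c_k/μ_k equals the conditional mean of the top k scores: p_k = (Σ_{i≤k} s_i P(S=s_i)) / (Σ_{i≤k} P(S=s_i)); moreover p_k is attained by the deterministic threshold classifier R defined by R = 1 iff S ≥ s_k, for which P(R=1) = μ_k and PPV(R) = p_k. -/

import Mathlib

open Finset

/-!
Single-group setting.  A finite probability space `(Ω, P)`, a binary target `Y` with
base rate `π := P(Y = 1)`, and a calibrated score `S` taking `m > 1` distinct values
`1 ≥ s_1 > ⋯ > s_m ≥ 0` (here 0-indexed: `s i` is the paper's `s_{i+1}`), each with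
positive probability `w i = P(S = s i)`, are—via calibration
`P(Y = 1 ∣ S = s i) = s i`—completely described, for the purposes of classifiers
based on `S`, by the data below.  A (possibly randomized) binary classifier `R`
based on `S` (i.e. `P(R = 1 ∣ S, Y) = P(R = 1 ∣ S)`) is in turn determined by its
selection rule `t i = P(R = 1 ∣ S = s i)`, with `P(R = 1) = ∑ i, w i * t i`,
`P(Y = 1, R = 1) = ∑ i, s i * w i * t i`, `PPV(R) = P(Y = 1 ∣ R = 1)` and
`FOR(R) = P(Y = 1 ∣ R = 0)` as given below.
-/
structure CalibScore where
  m : ℕ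
  s : ℕ → ℝ
  w : ℕ → ℝ
  one_lt_m : 1 < m
  s_nonneg : ∀ i, i < m → 0 ≤ s i
  s_le_one : ∀ i, i < m → s i ≤ 1
  s_desc : ∀ i j, i < j → j < m → s j < s i
  w_pos : ∀ i, i < m → 0 < w i
  w_sum : ∑ i ∈ Finset.range m, w i = 1

namespace CalibScore

/-- Base rate `π = P(Y = 1) = E[S]` (by calibration). -/
noncomputable def pi (D : CalibScore) : ℝ := ∑ i ∈ Finset.range D.m, D.s i * D.w i

/-- `t` is a selection rule (`t i = P(R = 1 ∣ S = s i)` for a classifier `R` based on `S`). -/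
def IsSelRule (D : CalibScore) (t : ℕ → ℝ) : Prop := ∀ i, i < D.m → 0 ≤ t i ∧ t i ≤ 1

/-- Selection rate `μ = P(R = 1)`. -/
noncomputable def selRate (D : CalibScore) (t : ℕ → ℝ) : ℝ :=
  ∑ i ∈ Finset.range D.m, D.w i * t i

/-- `P(Y = 1, R = 1) = ∑ i, s i * P(S = s i) * P(R = 1 ∣ S = s i)` (by calibration). -/
noncomputable def posSel (D : CalibScore) (t : ℕ → ℝ) : ℝ :=
  ∑ i ∈ Finset.range D.m, D.s i * D.w i * t i

/-- `PPV(R) = P(Y = 1 ∣ R = 1)`. -/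
noncomputable def ppv (D : CalibScore) (t : ℕ → ℝ) : ℝ := D.posSel t / D.selRate t

/-- `FOR(R) = P(Y = 1 ∣ R = 0)`. -/
noncomputable def forr (D : CalibScore) (t : ℕ → ℝ) : ℝ :=
  (D.pi - D.posSel t) / (1 - D.selRate t)

/-- `(p, q)` is feasible with selection rate `μ`: attained by a nonconstant
classifier based on `S` with `P(R = 1) = μ`. -/
def FeasibleWith (D : CalibScore) (μ p q : ℝ) : Prop :=
  0 < μ ∧ μ < 1 ∧ ∃ t, D.IsSelRule t ∧ D.selRate t = μ ∧ D.ppv t = p ∧ D.forr t = q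

/-- The feasible region `C`. -/
def Feasible (D : CalibScore) (p q : ℝ) : Prop := ∃ μ, D.FeasibleWith μ p q

/-- `μ_k = ∑_{i ≤ k} P(S = s_i)` (1-based `k`; `μ_0 = 0`). -/
noncomputable def muk (D : CalibScore) (k : ℕ) : ℝ := ∑ i ∈ Finset.range k, D.w i

/-- `c_k = ∑_{i < k} P(S = s_i) (s_i − s_k)` (1-based `k`). -/
noncomputable def ck (D : CalibScore) (k : ℕ) : ℝ :=
  ∑ i ∈ Finset.range (k - 1), D.w i * (D.s i - D.s (k - 1))

/-- `I_k = (μ_{k−1}, μ_k] ∩ (0, 1)` (1-based `k`). -/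
def Ik (D : CalibScore) (k : ℕ) : Set ℝ :=
  Set.Ioc (D.muk (k - 1)) (D.muk k) ∩ Set.Ioo 0 1

/-- `p*(μ)`: the supremum of `p` over pairs `(p, q)` feasible with `μ` having `q ≤ π ≤ p`. -/
noncomputable def pStar (D : CalibScore) (μ : ℝ) : ℝ :=
  sSup {p | ∃ q, D.FeasibleWith μ p q ∧ q ≤ D.pi ∧ D.pi ≤ p}

/-- `q*(μ)`: the infimum of `q` over pairs `(p, q)` feasible with `μ` having `q ≤ π ≤ p`. -/
noncomputable def qStar (D : CalibScore) (μ : ℝ) : ℝ :=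
  sInf {q | ∃ p, D.FeasibleWith μ p q ∧ q ≤ D.pi ∧ D.pi ≤ p}

/-- `p_k = s_k + c_k / μ_k` (1-based `k`), the breakpoint values of the boundary. -/
noncomputable def pkF (D : CalibScore) (k : ℕ) : ℝ := D.s (k - 1) + D.ck k / D.muk k

/-- The boundary formula `q(p) = ((π − c_k) p − s_k π) / (p − s_k − c_k)` on `J_k`
(1-based `k`). -/
noncomputable def qF (D : CalibScore) (k : ℕ) (p : ℝ) : ℝ :=
  ((D.pi - D.ck k) * p - D.s (k - 1) * D.pi) / (p - D.s (k - 1) - D.ck k)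

end CalibScore

/-!
The threshold rule `R = 1 ⟺ S ≥ s_k` selects exactly the top `k` score values, so its selection
rate is `μ_k` and its PPV is the mean score of the top `k` values, which rewrites as
`s_k + c_k / μ_k`. Optimality is the bathtub principle: for every selection rule `t`, every term
of `∑ (s_i - s_k) w_i (t_i - 1[i ≤ k])` is `≤ 0`, because the threshold rule takes everything
scoring above `s_k` and nothing below. Hence among rules with rate `μ_k` it maximises
`P(Y = 1, R = 1)`. Applied to the constant rule `t ≡ μ_k`, the same inequality gives
`π μ_k ≤ P(Y = 1, R = 1)`, i.e. `FOR ≤ π ≤ PPV` for the threshold rule, so it lies in the set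
defining `p*(μ_k)` and is its greatest element.
-/

namespace CalibScore

def threshold (k : ℕ) : ℕ → ℝ := fun i => if i < k then 1 else 0

lemma sum_mul_threshold {m k : ℕ} (hkm : k ≤ m) (f : ℕ → ℝ) :
    ∑ i ∈ range m, f i * threshold k i = ∑ i ∈ range k, f i := by
  rw [← sum_range_add_sum_Ico _ hkm, ← add_zero (∑ i ∈ range k, f i)]
  congr 1
  · exact sum_congr rfl fun i hi => by simp [threshold, mem_range.mp hi]
  · exact sum_eq_zero fun i hi => by simp [threshold, (mem_Ico.mp hi).1]

variable (D : CalibScore)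

lemma s_le_s_of_le {i j : ℕ} (hij : i ≤ j) (hj : j < D.m) : D.s j ≤ D.s i :=
  hij.eq_or_lt.elim (fun h => h ▸ le_rfl) fun h => (D.s_desc i j h hj).le

lemma isSelRule_threshold (k : ℕ) : D.IsSelRule (threshold k) := fun i _ => by
  unfold threshold; split_ifs <;> norm_num

lemma isSelRule_const {c : ℝ} (hc0 : 0 ≤ c) (hc1 : c ≤ 1) : D.IsSelRule fun _ => c :=
  fun _ _ => ⟨hc0, hc1⟩

lemma selRate_threshold {k : ℕ} (hkm : k ≤ D.m) : D.selRate (threshold k) = D.muk k :=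
  sum_mul_threshold hkm D.w

lemma posSel_threshold {k : ℕ} (hkm : k ≤ D.m) :
    D.posSel (threshold k) = ∑ i ∈ range k, D.s i * D.w i :=
  sum_mul_threshold hkm _

lemma selRate_const (c : ℝ) : D.selRate (fun _ => c) = c := by
  rw [selRate, ← sum_mul, D.w_sum, one_mul]

lemma posSel_const (c : ℝ) : D.posSel (fun _ => c) = D.pi * c := by
  rw [posSel, ← sum_mul, pi]

lemma muk_pos {k : ℕ} (hk1 : 1 ≤ k) (hkm : k ≤ D.m) : 0 < D.muk k :=
  sum_pos (fun i hi => D.w_pos i ((mem_range.mp hi).trans_le hkm)) ⟨0, mem_range.mpr hk1⟩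

lemma muk_nonneg {k : ℕ} (hkm : k ≤ D.m) : 0 ≤ D.muk k :=
  sum_nonneg fun i hi => (D.w_pos i ((mem_range.mp hi).trans_le hkm)).le

lemma muk_le_one {k : ℕ} (hkm : k ≤ D.m) : D.muk k ≤ 1 :=
  D.w_sum ▸ sum_le_sum_of_subset_of_nonneg (range_subset_range.mpr hkm)
    fun i hi _ => (D.w_pos i (mem_range.mp hi)).le

lemma muk_lt_one {k : ℕ} (hkm : k < D.m) : D.muk k < 1 :=
  D.w_sum ▸ sum_lt_sum_of_subset (range_subset_range.mpr hkm.le) (mem_range.mpr hkm)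
    (by simp) (D.w_pos k hkm) fun i hi _ => (D.w_pos i (mem_range.mp hi)).le

lemma ck_eq {k : ℕ} (hk1 : 1 ≤ k) :
    D.ck k = ∑ i ∈ range k, D.s i * D.w i - D.s (k - 1) * D.muk k := by
  obtain ⟨j, rfl⟩ := Nat.exists_eq_add_of_le' hk1
  simp only [ck, muk, Nat.add_sub_cancel, sum_range_succ, mul_add, mul_sum]
  rw [add_sub_add_right_eq_sub, ← sum_sub_distrib]
  exact sum_congr rfl fun _ _ => by ring

lemma pkF_eq_div {k : ℕ} (hk1 : 1 ≤ k) (hkm : k ≤ D.m) :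
    D.pkF k = (∑ i ∈ range k, D.s i * D.w i) / D.muk k := by
  have := (D.muk_pos hk1 hkm).ne'
  rw [pkF, D.ck_eq hk1]
  field_simp
  ring

lemma ppv_threshold {k : ℕ} (hk1 : 1 ≤ k) (hkm : k ≤ D.m) :
    D.ppv (threshold k) = D.pkF k := by
  rw [ppv, D.posSel_threshold hkm, D.selRate_threshold hkm, D.pkF_eq_div hk1 hkm]

lemma posSel_le_posSel_threshold_add {k : ℕ} (hkm : k ≤ D.m) {t : ℕ → ℝ}
    (ht : D.IsSelRule t) :
    D.posSel t ≤
      D.posSel (threshold k) + D.s (k - 1) * (D.selRate t - D.selRate (threshold k)) := by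
  simp only [posSel, selRate, ← sum_sub_distrib, mul_sum, ← sum_add_distrib]
  refine sum_le_sum fun i hi => ?_
  have hi : i < D.m := mem_range.mp hi
  obtain ⟨ht0, ht1⟩ := ht i hi
  have hw := (D.w_pos i hi).le
  have hgap : (D.s i - D.s (k - 1)) * (t i - threshold k i) ≤ 0 := by
    unfold threshold
    split_ifs with hik
    · exact mul_nonpos_of_nonneg_of_nonpos
        (sub_nonneg.mpr (D.s_le_s_of_le (Nat.le_sub_one_of_lt hik) (by omega))) (by linarith)
    · exact mul_nonpos_of_nonpos_of_nonneg
        (sub_nonpos.mpr (D.s_le_s_of_le (by omega) hi)) (by linarith)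
  nlinarith [mul_nonpos_of_nonneg_of_nonpos hw hgap]

lemma posSel_le_posSel_threshold {k : ℕ} (hkm : k ≤ D.m) {t : ℕ → ℝ}
    (ht : D.IsSelRule t) (hrate : D.selRate t = D.muk k) :
    D.posSel t ≤ D.posSel (threshold k) := by
  simpa [hrate, D.selRate_threshold hkm] using D.posSel_le_posSel_threshold_add hkm ht

lemma pi_mul_muk_le {k : ℕ} (hkm : k ≤ D.m) :
    D.pi * D.muk k ≤ ∑ i ∈ range k, D.s i * D.w i := by
  rw [← D.posSel_const, ← D.posSel_threshold hkm]
  exact D.posSel_le_posSel_threshold hkm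
    (D.isSelRule_const (D.muk_nonneg hkm) (D.muk_le_one hkm)) (D.selRate_const _)

lemma pi_le_pkF {k : ℕ} (hk1 : 1 ≤ k) (hkm : k ≤ D.m) : D.pi ≤ D.pkF k := by
  rw [D.pkF_eq_div hk1 hkm, le_div_iff₀ (D.muk_pos hk1 hkm)]
  exact D.pi_mul_muk_le hkm

lemma forr_threshold_le_pi {k : ℕ} (hkm : k < D.m) :
    D.forr (threshold k) ≤ D.pi := by
  rw [forr, D.posSel_threshold hkm.le, D.selRate_threshold hkm.le,
    div_le_iff₀ (sub_pos.mpr (D.muk_lt_one hkm))]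
  nlinarith [D.pi_mul_muk_le hkm.le]

lemma isGreatest_pStar_set {k : ℕ} (hk1 : 1 ≤ k) (hkm : k < D.m) :
    IsGreatest {p | ∃ q, D.FeasibleWith (D.muk k) p q ∧ q ≤ D.pi ∧ D.pi ≤ p} (D.pkF k) := by
  refine ⟨⟨_, ⟨D.muk_pos hk1 hkm.le, D.muk_lt_one hkm, threshold k, D.isSelRule_threshold k,
    D.selRate_threshold hkm.le, D.ppv_threshold hk1 hkm.le, rfl⟩,
    D.forr_threshold_le_pi hkm, D.pi_le_pkF hk1 hkm.le⟩, ?_⟩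
  rintro p ⟨q, ⟨hμ, -, t, ht, hrate, rfl, -⟩, -, -⟩
  rw [← D.ppv_threshold hk1 hkm.le, ppv, ppv, hrate, D.selRate_threshold hkm.le]
  exact div_le_div_of_nonneg_right (D.posSel_le_posSel_threshold hkm.le ht hrate) hμ.le

lemma pStar_muk {k : ℕ} (hk1 : 1 ≤ k) (hkm : k < D.m) : D.pStar (D.muk k) = D.pkF k :=
  (D.isGreatest_pStar_set hk1 hkm).csSup_eq

end CalibScore

/-- For every `k ∈ {1, …, m}`, the breakpoint value
`p_k = p*(μ_k) = s_k + c_k/μ_k` equals the conditional mean of the top `k` scores,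
`(∑_{i ≤ k} s_i P(S = s_i)) / (∑_{i ≤ k} P(S = s_i))`; moreover `p_k` is attained by
the deterministic threshold classifier `R = 1` iff `S ≥ s_k` (selection rule
`t i = 1` for `i ≤ k`, `0` otherwise), for which `P(R = 1) = μ_k` and `PPV(R) = p_k`. -/
theorem stmt9 (D : CalibScore) (k : ℕ) (hk1 : 1 ≤ k) (hkm : k ≤ D.m) :
    D.pkF k = (∑ i ∈ Finset.range k, D.s i * D.w i) / (∑ i ∈ Finset.range k, D.w i) ∧
    (k < D.m → D.pStar (D.muk k) = D.pkF k) ∧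
    D.selRate (fun i => if i < k then (1 : ℝ) else 0) = D.muk k ∧
    D.ppv (fun i => if i < k then (1 : ℝ) else 0) = D.pkF k :=
  ⟨D.pkF_eq_div hk1 hkm, D.pStar_muk hk1, D.selRate_threshold hkm, D.ppv_threshold hk1 hkm⟩
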